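/- arXiv:math/0002064 — 5 statements merged into one kernel-verified Lean document; each statement's English description precedes it below -/
import Mathlib

section
/- Let V be a commutative ring and m ⊆ V an ideal satisfying m·m = m. Assume that m is the union of a family of principal ideals of V that is directed under inclusion (i.e. m is a filtered colimit of principal ideals). Then the V-module m ⊗_V m is flat. -/
/-!
Since `m` is a directed union of principal ideals, any two elements of `m` are multiples of a
common element of `m`, hence every element of `m ⊗ m` has the form `c • (e ⊗ e)` with `e ∈ m`,
and any two of them are multiples of a common one. By the equational criterion, flatness then
reduces to showing that a relation `s • (a ⊗ a) = 0` becomes trivial after writing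
`a ⊗ a = b • (e ⊗ e)` with `s * b = 0`. Tensor products commute with directed unions, so the
relation already holds in `(r) ⊗ (r)` for some `r ∈ m` with `a = d * r`; as `(r) ≅ R ⧸ ann r`,
this says `s * d² * r = 0`. Finally `m = m * m` lets us write `r = c * e²` with `e ∈ m`, and
`b = (d * c * e)²` works.
-/

open TensorProduct Submodule

namespace Submodule

variable {R Q M ι : Type*} [CommRing R] [AddCommGroup Q] [Module R Q] [AddCommGroup M]
  [Module R M] {N : ι → Submodule R Q} {P : Submodule R Q}

theorem exists_rTensor_inclusion_eq_zero_of_directed (hN : Directed (· ≤ ·) N)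
    (hle : ∀ i, N i ≤ P) (hcov : P ≤ ⨆ i, N i) {i : ι} {x : N i ⊗[R] M}
    (hx : (inclusion (hle i)).rTensor M x = 0) :
    ∃ j, ∃ h : N i ≤ N j, (inclusion h).rTensor M x = 0 := by
  classical
  have : Nonempty ι := ⟨i⟩
  let _ : Preorder ι := Preorder.lift N
  have : IsDirectedOrder ι := ⟨hN⟩
  let f : ∀ i j, i ≤ j → N i →ₗ[R] N j := fun i j h => inclusion h
  have : DirectedSystem (fun i => N i) (f · · ·) := ⟨fun _ _ => rfl, fun _ _ _ _ _ _ => rfl⟩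
  let e := Module.DirectLimit.lift R ι _ f (fun i => inclusion (hle i)) fun _ _ _ _ => rfl
  have he_of : ∀ j (y : N j), e (Module.DirectLimit.of R ι _ f j y) = inclusion (hle j) y :=
    fun j y => Module.DirectLimit.lift_of (G := fun i => N i) (P := P) _ _ y
  have he : Function.Bijective e := by
    refine ⟨Module.DirectLimit.lift_injective _ _ fun i => inclusion_injective _, fun y => ?_⟩
    obtain ⟨j, hj⟩ := (mem_iSup_of_directed N hN).mp (hcov y.2)
    exact ⟨Module.DirectLimit.of R ι _ f j ⟨y, hj⟩, he_of j _⟩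
  have hcomp : e ∘ₗ Module.DirectLimit.of R ι _ f i = inclusion (hle i) := LinearMap.ext (he_of i)
  rw [← hcomp, LinearMap.rTensor_comp_apply] at hx
  have hx' := congrArg (TensorProduct.directLimitLeft f M)
    (((LinearEquiv.ofBijective e he).rTensor M).map_eq_zero_iff.mp hx)
  rw [TensorProduct.directLimitLeft_rTensor_of, map_zero] at hx'
  exact Module.DirectLimit.of.zero_exact hx'

theorem exists_tmul_eq_zero_of_directed (hN : Directed (· ≤ ·) N)
    (hle : ∀ i, N i ≤ P) (hcov : P ≤ ⨆ i, N i) {i : ι} {x y : N i}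
    (hxy : inclusion (hle i) x ⊗ₜ[R] inclusion (hle i) y = 0) :
    ∃ j, ∃ h : N i ≤ N j, inclusion h x ⊗ₜ[R] inclusion h y = 0 := by
  obtain ⟨j₁, h₁, hx⟩ := exists_rTensor_inclusion_eq_zero_of_directed hN hle hcov
    (x := x ⊗ₜ[R] inclusion (hle i) y) hxy
  rw [LinearMap.rTensor_tmul] at hx
  obtain ⟨j₂, h₂, hy⟩ := exists_rTensor_inclusion_eq_zero_of_directed hN hle hcov
    (x := y ⊗ₜ[R] inclusion h₁ x) (by simpa using congrArg (TensorProduct.comm R _ _) hx)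
  rw [LinearMap.rTensor_tmul] at hy
  obtain ⟨j, hj₁, hj₂⟩ := hN j₁ j₂
  refine ⟨j, h₁.trans hj₁, ?_⟩
  have := congrArg
    (TensorProduct.comm R _ _ ∘ TensorProduct.map (inclusion hj₂) (inclusion hj₁)) hy
  simp only [Function.comp_apply, map_tmul, comm_tmul, map_zero] at this
  exact this

/-- Multiplication in `R ⧸ ann x ≅ R ∙ x` sends `x ⊗ x` to `1`. -/
theorem smul_eq_zero_of_smul_tmul_self_eq_zero {x : M} {s : R}
    (h : s • ((⟨x, mem_span_singleton_self x⟩ : R ∙ x) ⊗ₜ[R]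
      (⟨x, mem_span_singleton_self x⟩ : R ∙ x)) = 0) :
    s • x = 0 := by
  let e := (Ideal.quotTorsionOfEquivSpanSingleton R M x).symm
  have he : e ⟨x, mem_span_singleton_self x⟩ = 1 := by
    rw [LinearEquiv.symm_apply_eq, ← one_smul R (⟨x, _⟩ : R ∙ x)]
    rfl
  have := congrArg (LinearMap.mul' R (R ⧸ Ideal.torsionOf R M x) ∘ₗ TensorProduct.map ↑e ↑e) h
  simp only [LinearMap.map_smul, map_zero, LinearMap.comp_apply, map_tmul, LinearEquiv.coe_coe,
    he, LinearMap.mul'_apply, mul_one] at this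
  rw [← Ideal.mem_torsionOf_iff, ← Ideal.Quotient.eq_zero_iff_mem,
    ← mul_one (Ideal.Quotient.mk _ s)]
  exact this

end Submodule

namespace Module

variable (R M : Type*) [CommRing R] [AddCommGroup M] [Module R M]

/-- Equivalently, every finitely generated submodule is cyclic. -/
def IsLocallyCyclic : Prop :=
  ∀ a b : M, ∃ (e : M) (p q : R), a = p • e ∧ b = q • e

variable {R M}

theorem IsLocallyCyclic.exists_smul_eq (hM : IsLocallyCyclic R M) :
    ∀ {n : ℕ} (x : Fin n → M), ∃ (y : M) (c : Fin n → R), x = fun i => c i • y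
  | 0, _ => ⟨0, 0, funext fun i => i.elim0⟩
  | _ + 1, x => by
    obtain ⟨y, c, hc⟩ := hM.exists_smul_eq (Fin.tail x)
    obtain ⟨e, p, q, rfl, hx⟩ := hM y (x 0)
    refine ⟨e, Fin.cons q fun i => c i * p, funext <| Fin.cases hx fun i => ?_⟩
    simp only [Fin.cons_succ, mul_smul]
    exact congrFun hc i

theorem Flat.of_isLocallyCyclic (hM : IsLocallyCyclic R M)
    (hann : ∀ (s : R) (y : M), s • y = 0 → ∃ (b : R) (z : M), y = b • z ∧ s * b = 0) :
    Flat R M := by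
  refine Flat.iff_forall_isTrivialRelation.mpr fun {n f x} hfx => ?_
  obtain ⟨y, c, rfl⟩ := hM.exists_smul_eq x
  obtain ⟨b, z, rfl, hb⟩ :=
    hann (∑ i, f i * c i) y (by simpa [Finset.sum_smul, mul_smul] using hfx)
  refine ⟨1, fun i _ => c i * b, fun _ => z, fun i => by simp [mul_smul], fun _ => ?_⟩
  simp [← mul_assoc, ← Finset.sum_mul, hb]

theorem IsLocallyCyclic.exists_eq_smul_tmul_self (hM : IsLocallyCyclic R M) (t : M ⊗[R] M) :
    ∃ (c : R) (e : M), t = c • (e ⊗ₜ[R] e) := by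
  induction t with
  | zero => exact ⟨0, 0, by simp⟩
  | tmul a b =>
    obtain ⟨e, p, q, rfl, rfl⟩ := hM a b
    exact ⟨p * q, e, smul_tmul_smul p q e e⟩
  | add t t' ht ht' =>
    obtain ⟨c, a, rfl⟩ := ht
    obtain ⟨c', a', rfl⟩ := ht'
    obtain ⟨e, p, q, rfl, rfl⟩ := hM a a'
    exact ⟨c * (p * p) + c' * (q * q), e, by simp only [smul_tmul_smul, add_smul, mul_smul]⟩

theorem IsLocallyCyclic.tensorProduct_self (hM : IsLocallyCyclic R M) :
    IsLocallyCyclic R (M ⊗[R] M) := by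
  intro t t'
  obtain ⟨c, a, rfl⟩ := hM.exists_eq_smul_tmul_self t
  obtain ⟨c', a', rfl⟩ := hM.exists_eq_smul_tmul_self t'
  obtain ⟨e, p, q, rfl, rfl⟩ := hM a a'
  exact ⟨e ⊗ₜ[R] e, c * (p * p), c' * (q * q), by simp only [smul_tmul_smul, mul_smul],
    by simp only [smul_tmul_smul, mul_smul]⟩

end Module

namespace Ideal

variable {R : Type*} [CommRing R] {m : Ideal R}

theorem isLocallyCyclic_of_directed (hdir : Directed (· ≤ ·) fun a : m => span {(a : R)}) :
    Module.IsLocallyCyclic R m := by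
  intro a b
  obtain ⟨e, ha, hb⟩ := hdir a b
  obtain ⟨p, hp⟩ := mem_span_singleton'.mp (ha (mem_span_singleton_self _))
  obtain ⟨q, hq⟩ := mem_span_singleton'.mp (hb (mem_span_singleton_self _))
  exact ⟨e, p, q, Subtype.ext hp.symm, Subtype.ext hq.symm⟩

theorem exists_eq_mul_mul_self_of_mul_self_eq (hcyc : Module.IsLocallyCyclic R m)
    (hmm : m * m = m) {a : R} (ha : a ∈ m) : ∃ (c : R) (e : m), a = c * e * e := by
  rw [← hmm] at ha
  refine Submodule.mul_induction_on ha (fun x hx y hy => ?_) fun x y hx hy => ?_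
  · obtain ⟨e, p, q, hpe, hqe⟩ := hcyc ⟨x, hx⟩ ⟨y, hy⟩
    refine ⟨p * q, e, ?_⟩
    rw [show x = p * e from congrArg Subtype.val hpe, show y = q * e from congrArg Subtype.val hqe]
    ring
  · obtain ⟨c, e, rfl⟩ := hx
    obtain ⟨c', e', rfl⟩ := hy
    obtain ⟨f, p, q, rfl, rfl⟩ := hcyc e e'
    exact ⟨c * p * p + c' * q * q, f, by simp only [Submodule.coe_smul, smul_eq_mul]; ring⟩

theorem exists_tmul_self_eq_smul_of_smul_eq_zero
    (hdir : Directed (· ≤ ·) fun a : m => span {(a : R)}) (hmm : m * m = m)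
    {s : R} {a : m} (hs : s • (a ⊗ₜ[R] a) = 0) :
    ∃ (b : R) (e : m), a ⊗ₜ[R] a = b • (e ⊗ₜ[R] e) ∧ s * b = 0 := by
  have hle : ∀ a : m, span {(a : R)} ≤ m := fun a => (span_singleton_le_iff_mem _).mpr a.2
  have hcov : m ≤ ⨆ a : m, span {(a : R)} := fun a ha =>
    Submodule.mem_iSup_of_mem ⟨a, ha⟩ (mem_span_singleton_self a)
  obtain ⟨r, har, hr⟩ := Submodule.exists_tmul_eq_zero_of_directed hdir hle hcov
    (x := s • ⟨a, mem_span_singleton_self _⟩) (y := ⟨a, mem_span_singleton_self _⟩)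
    (by rw [map_smul, ← smul_tmul']; exact hs)
  obtain ⟨d, hd⟩ := mem_span_singleton'.mp (har (mem_span_singleton_self _))
  have hsd : s * d * d * r = 0 := by
    have ha : inclusion har ⟨a, mem_span_singleton_self _⟩ =
        d • ⟨(r : R), mem_span_singleton_self _⟩ := Subtype.ext hd.symm
    rw [map_smul, ha, ← smul_tmul', smul_tmul_smul, smul_smul, ← mul_assoc] at hr
    exact Submodule.smul_eq_zero_of_smul_tmul_self_eq_zero (M := R) hr
  obtain ⟨c, e, hce⟩ :=
    exists_eq_mul_mul_self_of_mul_self_eq (isLocallyCyclic_of_directed hdir) hmm r.2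
  refine ⟨(d * c * e) * (d * c * e), e, ?_, ?_⟩
  · rw [← smul_tmul_smul]
    congr 1 <;> exact Subtype.ext (by simp [← hd, hce]; ring)
  · linear_combination c * hsd - (c * s * d * d) * hce

theorem flat_tensorProduct_self (hdir : Directed (· ≤ ·) fun a : m => span {(a : R)})
    (hmm : m * m = m) : Module.Flat R (m ⊗[R] m) := by
  have hcyc := isLocallyCyclic_of_directed hdir
  refine Module.Flat.of_isLocallyCyclic hcyc.tensorProduct_self fun s t hst => ?_
  obtain ⟨c, a, rfl⟩ := hcyc.exists_eq_smul_tmul_self t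
  rw [smul_smul] at hst
  obtain ⟨b, e, hae, hb⟩ := exists_tmul_self_eq_smul_of_smul_eq_zero hdir hmm hst
  exact ⟨c * b, e ⊗ₜ[R] e, by rw [hae, smul_smul], by rw [← mul_assoc, hb]⟩

theorem directed_span_singleton_of_eq_iSup {ι : Type*} [Nonempty ι] {g : ι → R}
    (hdir : Directed (· ≤ ·) fun i => span {g i}) (hsup : m = ⨆ i, span {g i}) :
    Directed (· ≤ ·) fun a : m => span {(a : R)} := by
  have hmem : ∀ a : m, ∃ i, (a : R) ∈ span {g i} := fun a =>
    (Submodule.mem_iSup_of_directed _ hdir).mp (hsup ▸ a.2)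
  intro a b
  obtain ⟨i, hi⟩ := hmem a
  obtain ⟨j, hj⟩ := hmem b
  obtain ⟨k, hik, hjk⟩ := hdir i j
  have hk : g k ∈ m := hsup ▸ Submodule.mem_iSup_of_mem k (mem_span_singleton_self _)
  exact ⟨⟨g k, hk⟩, (span_singleton_le_iff_mem _).mpr (hik hi),
    (span_singleton_le_iff_mem _).mpr (hjk hj)⟩

end Ideal

/-- Let `V` be a commutative ring and `m ⊆ V` an ideal with `m·m = m`.
If `m` is the union of a directed family of principal ideals (i.e. a filtered colimit of
principal ideals), then the `V`-module `m ⊗_V m` is flat. -/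
theorem flat_tensor_of_directed_union_principal
    {V : Type*} [CommRing V] (m : Ideal V) (hm : m * m = m)
    {ι : Type*} [Nonempty ι] (g : ι → V)
    (hdir : Directed (· ≤ ·) fun i => Ideal.span {g i})
    (hsup : m = ⨆ i, Ideal.span {g i}) :
    Module.Flat V (TensorProduct V m m) :=
  Ideal.flat_tensorProduct_self (Ideal.directed_span_singleton_of_eq_iSup hdir hsup) hm
end

section
/- Let V be a commutative ring and m ⊆ V an ideal satisfying m·m = m. Then the following are equivalent: (a) for every integer k > 1, m is generated as an ideal by the k-th powers of its elements; (b) for every prime number p, the V-module m/p·m is generated by the images of the p-th powers x^p of elements x ∈ m. -/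
/-!
Write `I_n` for the ideal generated by the `n`-th powers of elements of `m`. Condition (b) says
`m = I_p + p·m`. Since `x ↦ x ^ p` is additive on `m` modulo `p·m`, this bootstraps to
`m = I_{p^s} + p·m ⊆ I_k + p·m` for every `s` with `k ≤ p ^ s`, and the relations for the different
primes multiply to `m = I_k + N·m` for every `N ≠ 0`. For `N = k!` this gives `m = I_k`, because
`k! x₁⋯x_k` is the `k`-th mixed forward difference of `x ↦ x ^ k` with steps `x₁, …, x_k`, so it
lies in `I_k`, and `m = m ^ k`.
-/

open Pointwise fwdDiff Finset

section IteratedFwdDiff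

variable {M G : Type*} [AddCommMonoid M] [AddCommGroup G]

def iteratedFwdDiff : List M → (M → G) → M → G
  | [], f => f
  | h :: l, f => iteratedFwdDiff l (Δ_[h] f)

theorem iteratedFwdDiff_finsetSum {α : Type*} (l : List M) (s : Finset α) (f : α → M → G) :
    iteratedFwdDiff l (∑ i ∈ s, f i) = ∑ i ∈ s, iteratedFwdDiff l (f i) := by
  induction l generalizing f with
  | nil => rfl
  | cons h l ih => simp only [iteratedFwdDiff, fwdDiff_finsetSum, ih]

theorem iteratedFwdDiff_const_smul {R : Type*} [Monoid R] [DistribMulAction R G]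
    (l : List M) (r : R) (f : M → G) :
    iteratedFwdDiff l (r • f) = r • iteratedFwdDiff l f := by
  induction l generalizing f with
  | nil => rfl
  | cons h l ih => simp only [iteratedFwdDiff, fwdDiff_const_smul, ih]

theorem iteratedFwdDiff_mem {S : AddSubmonoid M} {T : AddSubgroup G} {l : List M}
    (hl : ∀ h ∈ l, h ∈ S) {f : M → G} (hf : ∀ y ∈ S, f y ∈ T) {y : M} (hy : y ∈ S) :
    iteratedFwdDiff l f y ∈ T := by
  induction l generalizing f with
  | nil => exact hf y hy
  | cons h l ih =>
    refine ih (fun h' hh' => hl h' (List.mem_cons_of_mem h hh')) fun z hz => ?_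
    exact T.sub_mem (hf _ (S.add_mem hz (hl h List.mem_cons_self))) (hf z hz)

end IteratedFwdDiff

section PowFwdDiff

variable {R : Type*} [CommRing R]

theorem fwdDiff_pow (h : R) (j : ℕ) :
    Δ_[h] (fun r : R => r ^ j) =
      ∑ i ∈ range j, (j.choose i * h ^ (j - i)) • fun r : R => r ^ i := by
  ext r
  simp [fwdDiff, add_pow, sum_range_succ, mul_comm, mul_assoc]

theorem iteratedFwdDiff_pow_of_lt {l : List R} {j : ℕ} (hj : j < l.length) :
    iteratedFwdDiff l (fun r : R => r ^ j) = 0 := by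
  induction l generalizing j with
  | nil => simp at hj
  | cons h l ih =>
    rw [iteratedFwdDiff, fwdDiff_pow, iteratedFwdDiff_finsetSum]
    refine sum_eq_zero fun i hi => ?_
    rw [iteratedFwdDiff_const_smul, ih (by simp at hi hj; omega), smul_zero]

theorem iteratedFwdDiff_pow_length (l : List R) :
    iteratedFwdDiff l (fun r : R => r ^ l.length) = fun _ => (l.length.factorial : R) * l.prod := by
  induction l with
  | nil => ext; simp [iteratedFwdDiff]
  | cons h l ih =>
    rw [iteratedFwdDiff, fwdDiff_pow, iteratedFwdDiff_finsetSum, List.length_cons,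
      sum_range_succ, sum_eq_zero fun i hi => ?_, zero_add, iteratedFwdDiff_const_smul, ih]
    · ext
      simp only [Nat.choose_succ_self_right, Nat.cast_add, Nat.cast_one, add_tsub_cancel_left,
        pow_one, Pi.smul_apply, smul_eq_mul, Nat.factorial_succ, Nat.cast_mul, List.prod_cons]
      ring
    · rw [iteratedFwdDiff_const_smul, iteratedFwdDiff_pow_of_lt (by simpa using hi), smul_zero]

end PowFwdDiff

namespace Ideal

variable {R : Type*} [CommRing R]

def spanPow (I : Ideal R) (n : ℕ) : Ideal R := span ((· ^ n) '' (I : Set R))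

theorem pow_mem_spanPow {I : Ideal R} {x : R} (hx : x ∈ I) (n : ℕ) : x ^ n ∈ I.spanPow n :=
  subset_span ⟨x, hx, rfl⟩

theorem image_pow_subset (I : Ideal R) {n : ℕ} (hn : n ≠ 0) : (· ^ n) '' (I : Set R) ⊆ I := by
  rintro _ ⟨x, hx, rfl⟩
  exact I.pow_mem_of_mem hx n (Nat.pos_of_ne_zero hn)

theorem spanPow_le (I : Ideal R) {n : ℕ} (hn : n ≠ 0) : I.spanPow n ≤ I :=
  span_le.2 (I.image_pow_subset hn)

theorem spanPow_antitone (I : Ideal R) {k n : ℕ} (hkn : k ≤ n) : I.spanPow n ≤ I.spanPow k :=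
  span_le.2 <| by
    rintro _ ⟨x, hx, rfl⟩
    show x ^ n ∈ _
    rw [← pow_mul_pow_sub x hkn]
    exact mul_mem_right _ _ (pow_mem_spanPow hx k)

theorem factorial_mul_list_prod_mem_spanPow {I : Ideal R} {l : List R} (hl : ∀ x ∈ l, x ∈ I) :
    (l.length.factorial : R) * l.prod ∈ I.spanPow l.length := by
  have h := iteratedFwdDiff_mem (S := I.toAddSubmonoid) (T := (I.spanPow l.length).toAddSubgroup)
    hl (fun y hy => pow_mem_spanPow hy l.length) I.zero_mem
  rwa [iteratedFwdDiff_pow_length] at h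

theorem span_singleton_factorial_mul_le_spanPow {I : Ideal R} (hI : IsIdempotentElem I) {k : ℕ}
    (hk : k ≠ 0) : span {(k.factorial : R)} * I ≤ I.spanPow k := by
  rw [span_singleton_mul_le_iff]
  intro a ha
  rw [← hI.pow_eq hk, Submodule.pow_eq_span_pow_set] at ha
  induction ha using Submodule.span_induction with
  | mem b hb =>
    obtain ⟨f, rfl⟩ := Set.mem_pow.1 hb
    simpa using factorial_mul_list_prod_mem_spanPow (I := I) (l := List.ofFn fun i => (f i : R))
      (by simp)
  | zero => simp
  | add x y _ _ hx hy => rw [mul_add]; exact add_mem hx hy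
  | smul r x _ hx => rw [smul_eq_mul, mul_left_comm]; exact mul_mem_left _ _ hx

theorem pow_mem_span_image_pow_sup {q : ℕ} (hq : q.Prime) {I : Ideal R} {s : Set R}
    (hs : s ⊆ I) {x : R} (hx : x ∈ span s ⊔ span {(q : R)} * I) :
    x ^ q ∈ span ((· ^ q) '' s) ⊔ span {(q : R)} * I := by
  set K := span {(q : R)} * I
  rw [← span_eq K, ← span_union] at hx
  have hI : span (s ∪ K) ≤ I := span_le.2 (Set.union_subset hs (show K ≤ I from mul_le_right))
  induction hx using Submodule.span_induction with
  | mem y hy =>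
    rcases hy with hy | hy
    · exact Submodule.mem_sup_left (subset_span ⟨y, hy, rfl⟩)
    · exact Submodule.mem_sup_right (K.pow_mem_of_mem hy q hq.pos)
  | zero => rw [zero_pow hq.ne_zero]; exact zero_mem _
  | add y z hy _ ihy ihz =>
    rw [add_pow_prime_eq hq]
    refine add_mem (add_mem ihy ihz) (Submodule.mem_sup_right ?_)
    exact mul_mem_right _ _ (mul_mem_right _ _ (mul_mem_mul (mem_span_singleton_self _) (hI hy)))
  | smul r y _ ihy => rw [smul_eq_mul, mul_pow]; exact mul_mem_left _ _ ihy

theorem le_spanPow_prime_pow_sup {q : ℕ} (hq : q.Prime) {I : Ideal R}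
    (h : I ≤ I.spanPow q ⊔ span {(q : R)} * I) (n : ℕ) :
    I ≤ I.spanPow (q ^ n) ⊔ span {(q : R)} * I := by
  induction n with
  | zero => simp [spanPow]
  | succ n ih =>
    refine h.trans (sup_le (span_le.2 ?_) le_sup_right)
    rintro _ ⟨y, hy, rfl⟩
    have := pow_mem_span_image_pow_sup hq (I.image_pow_subset (pow_ne_zero n hq.ne_zero)) (ih hy)
    simp_rw [Set.image_image, ← pow_mul, ← pow_succ] at this
    exact this

theorem le_spanPow_sup_of_prime {q : ℕ} (hq : q.Prime) {I : Ideal R}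
    (h : I ≤ I.spanPow q ⊔ span {(q : R)} * I) (k : ℕ) :
    I ≤ I.spanPow k ⊔ span {(q : R)} * I :=
  (le_spanPow_prime_pow_sup hq h k).trans <|
    sup_le_sup_right (I.spanPow_antitone (Nat.lt_pow_self hq.one_lt).le) _

theorem le_sup_mul_mul {I J P Q : Ideal R} (hP : I ≤ J ⊔ P * I) (hQ : I ≤ J ⊔ Q * I) :
    I ≤ J ⊔ P * Q * I :=
  calc I ≤ J ⊔ P * (J ⊔ Q * I) := hP.trans (sup_le_sup_left (mul_mono_right hQ) _)
    _ = J ⊔ (P * J ⊔ P * Q * I) := by rw [mul_sup, mul_assoc]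
    _ ≤ J ⊔ P * Q * I := sup_le le_sup_left (sup_le (mul_le_right.trans le_sup_left) le_sup_right)

theorem le_sup_span_natCast_mul {I J : Ideal R}
    (h : ∀ p : ℕ, p.Prime → I ≤ J ⊔ span {(p : R)} * I) {n : ℕ} (hn : n ≠ 0) :
    I ≤ J ⊔ span {(n : R)} * I := by
  induction n using induction_on_primes with
  | zero => exact absurd rfl hn
  | one => simp
  | prime_mul p a hp ha =>
    rw [Nat.cast_mul, ← span_singleton_mul_span_singleton]
    exact le_sup_mul_mul (h p hp) (ha (right_ne_zero_of_mul hn))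

theorem spanPow_eq_self_iff {I : Ideal R} (hI : IsIdempotentElem I) :
    (∀ k, 1 < k → I.spanPow k = I) ↔ ∀ p : ℕ, p.Prime → I ≤ I.spanPow p ⊔ span {(p : R)} * I := by
  refine ⟨fun h p hp => (h p hp.one_lt).ge.trans le_sup_left, fun h k hk => ?_⟩
  refine (I.spanPow_le (by omega)).antisymm ?_
  calc I ≤ I.spanPow k ⊔ span {(k.factorial : R)} * I :=
        le_sup_span_natCast_mul (fun p hp => le_spanPow_sup_of_prime hp (h p hp) k)
          (Nat.factorial_ne_zero k)
    _ ≤ I.spanPow k := sup_le le_rfl (span_singleton_factorial_mul_le_spanPow hI (by omega))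

theorem span_range_mk_pow_eq_top_iff {I : Ideal R} (r : R) {n : ℕ} (hn : 0 < n) :
    Submodule.span R (Set.range fun x : I =>
      Submodule.Quotient.mk (p := r • (⊤ : Submodule R I))
        (⟨(x : R) ^ n, I.pow_mem_of_mem x.2 n hn⟩ : I)) = ⊤ ↔
      I ≤ I.spanPow n ⊔ span {r} * I := by
  set g : I → I := fun x => ⟨(x : R) ^ n, I.pow_mem_of_mem x.2 n hn⟩
  have hmap : (r • ⊤ ⊔ Submodule.span R (Set.range g)).map I.subtype =
      span {r} * I ⊔ I.spanPow n := by
    rw [Submodule.map_sup, ← Submodule.ideal_span_singleton_smul, Submodule.map_smul'',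
      Submodule.map_subtype_top, smul_eq_mul, Submodule.map_span, ← Set.range_comp,
      spanPow, Set.image_eq_range]
    rfl
  change Submodule.span R (Set.range ((r • ⊤ : Submodule R I).mkQ ∘ g)) = ⊤ ↔ _
  rw [Set.range_comp, ← Submodule.map_span, Submodule.map_mkQ_eq_top,
    ← (Submodule.map_injective_of_injective I.injective_subtype).eq_iff, hmap,
    Submodule.map_subtype_top, sup_comm]
  exact (sup_le (I.spanPow_le hn.ne') mul_le_right).ge_iff_eq.symm

end Ideal

/-- Let `V` be a commutative ring and `m ⊆ V` an ideal with `m·m = m`.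
The following are equivalent:
(a) for every integer `k > 1`, `m` is generated as an ideal by the `k`-th powers of its
elements;
(b) for every prime number `p`, the `V`-module `m/p·m` is generated by the images of the
`p`-th powers `x^p` of elements `x ∈ m`. -/
theorem span_pow_eq_self_iff_quotient_generated_by_prime_powers
    {V : Type*} [CommRing V] (m : Ideal V) (hm : m * m = m) :
    (∀ k : ℕ, 1 < k → Ideal.span ((fun x => x ^ k) '' (m : Set V)) = m) ↔
      (∀ p : ℕ, (hp : p.Prime) →
        Submodule.span V
          (Set.range fun x : m =>
            Submodule.Quotient.mk (p := (p : V) • (⊤ : Submodule V m))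
              (⟨(x : V) ^ p, Ideal.pow_mem_of_mem m x.2 p hp.pos⟩ : m)) = ⊤) :=
  (Ideal.spanPow_eq_self_iff hm).trans <| forall_congr' fun p =>
    forall_congr' fun hp => (Ideal.span_range_mk_pow_eq_top_iff (p : V) hp.pos).symm
end

section
/- Let V be a commutative ring and m ⊆ V an ideal satisfying m·m = m, and write m̃ = m ⊗_V m. For a V-module M let μ_M : m̃ ⊗_V M → M be the V-linear map determined by x ⊗ y ⊗ s ↦ (xy)·s. Then μ_M is an almost isomorphism, and for every V-linear map φ : N → M which is an almost isomorphism there exists a unique V-linear map ψ : m̃ ⊗_V M → N with φ ∘ ψ = μ_M. -/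
/-! Since `m = m²`, every `a ∈ m` is a sum of products `x * y` with `x, y ∈ m`. Such a product
acts on `m̃ ⊗ M` as `t ↦ (x ⊗ y) ⊗ μ(t)`, which kills `ker μ`, and `(x * y) • s = μ((x ⊗ y) ⊗ s)`
kills `coker μ`. Idempotence also gives `m • (m̃ ⊗ M) = m̃ ⊗ M`; so the difference of two lifts,
which takes values in the `m`-torsion module `ker φ`, vanishes. A lift is
`x ⊗ y ⊗ s ↦ x • n` for any `n` with `φ n = y • s`: the choice of `n` does not matter because
`m` kills `ker φ`. -/

/-- The multiplication map `m ⊗_V m → V`, `x ⊗ y ↦ x·y`. -/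
noncomputable def tensorMul {V : Type*} [CommRing V] (m : Ideal V) :
    TensorProduct V m m →ₗ[V] V :=
  TensorProduct.lift ((LinearMap.mul V V).compl₁₂ m.subtype m.subtype)

/-- For a `V`-module `M`, the map `μ_M : (m ⊗_V m) ⊗_V M → M` determined by
`x ⊗ y ⊗ s ↦ (x·y) • s`. -/
noncomputable def muMap {V : Type*} [CommRing V] (m : Ideal V)
    (M : Type*) [AddCommGroup M] [Module V M] :
    TensorProduct V (TensorProduct V m m) M →ₗ[V] M :=
  TensorProduct.lift ((LinearMap.lsmul V M).comp (tensorMul m))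

/-- A linear map of `V`-modules is an almost isomorphism (w.r.t. the ideal `m`) if its
kernel and cokernel are killed by `m`. -/
def IsAlmostIsomorphism {V : Type*} [CommRing V] (m : Ideal V)
    {N M : Type*} [AddCommGroup N] [Module V N]
    [AddCommGroup M] [Module V M] (φ : N →ₗ[V] M) : Prop :=
  (∀ a ∈ m, ∀ x ∈ LinearMap.ker φ, a • x = 0) ∧
    (∀ a ∈ m, ∀ y : M, a • y ∈ LinearMap.range φ)

open TensorProduct

section

variable {V : Type*} [CommRing V]

theorem Ideal.smul_top_eq_top_of_mul_self {I : Ideal V} (hI : I * I = I) :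
    I • (⊤ : Submodule V I) = ⊤ := by
  apply Submodule.map_injective_of_injective I.injective_subtype
  rw [Submodule.map_smul'', Submodule.map_top, Submodule.range_subtype, Ideal.smul_eq_mul, hI]

theorem TensorProduct.smul_top_eq_top_of_left {M N : Type*} [AddCommMonoid M] [Module V M]
    [AddCommMonoid N] [Module V N] {I : Ideal V} (h : I • (⊤ : Submodule V M) = ⊤) :
    I • (⊤ : Submodule V (M ⊗[V] N)) = ⊤ := by
  refine eq_top_iff.mpr
    ((TensorProduct.span_tmul_eq_top V M N).ge.trans (Submodule.span_le.mpr ?_))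
  rintro _ ⟨x, n, rfl⟩
  have hx : x ∈ I • (⊤ : Submodule V M) := by rw [h]; trivial
  have hmap : (I • (⊤ : Submodule V M)).map ((TensorProduct.mk V M N).flip n) ≤ I • ⊤ := by
    rw [Submodule.map_smul'']
    exact Submodule.smul_mono le_rfl le_top
  exact hmap (Submodule.mem_map_of_mem hx)

theorem LinearMap.eq_of_comp_eq_of_smul_top_eq_top {P N M : Type*} [AddCommMonoid P] [Module V P]
    [AddCommGroup N] [Module V N] [AddCommGroup M] [Module V M] {I : Ideal V}
    (hP : I • (⊤ : Submodule V P) = ⊤) {φ : N →ₗ[V] M}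
    (hφ : ∀ a ∈ I, ∀ x ∈ LinearMap.ker φ, a • x = 0) {ψ₁ ψ₂ : P →ₗ[V] N}
    (h : φ ∘ₗ ψ₁ = φ ∘ₗ ψ₂) : ψ₁ = ψ₂ := by
  have range_le_ker : LinearMap.range (ψ₁ - ψ₂) ≤ LinearMap.ker φ := by
    rintro _ ⟨t, rfl⟩
    rw [LinearMap.mem_ker, LinearMap.sub_apply, map_sub, ← LinearMap.comp_apply,
      ← LinearMap.comp_apply, h, sub_self]
  have : LinearMap.range (ψ₁ - ψ₂) = ⊥ := by
    rw [LinearMap.range_eq_map, ← hP, Submodule.map_smul'', ← LinearMap.range_eq_map,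
      eq_bot_iff, Submodule.smul_le]
    exact fun a ha x hx => (Submodule.mem_bot V).mpr (hφ a ha x (range_le_ker hx))
  exact sub_eq_zero.mp (LinearMap.range_eq_bot.mp this)

section MuMap

variable {m : Ideal V} {M : Type*} [AddCommGroup M] [Module V M]

@[simp]
theorem muMap_tmul (x y : m) (s : M) : muMap m M ((x ⊗ₜ y) ⊗ₜ s) = ((x : V) * y) • s := by
  simp [muMap, tensorMul]

theorem mul_smul_eq_tmul_muMap (x y : m) (t : (m ⊗[V] m) ⊗[V] M) :
    ((x : V) * y) • t = (x ⊗ₜ y) ⊗ₜ muMap m M t := by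
  suffices ((x : V) * y) • LinearMap.id = TensorProduct.mk V _ M (x ⊗ₜ y) ∘ₗ muMap m M from
    LinearMap.congr_fun this t
  refine TensorProduct.ext_threefold fun u v s => ?_
  have smul_tmul_smul : ∀ a b c d : m,
      ((a : V) * b) • (c ⊗ₜ[V] d) = ((a : V) • c) ⊗ₜ ((b : V) • d) := by
    intro a b c d
    rw [mul_smul, ← tmul_smul, smul_tmul']
  have smul_swap : ∀ a b : m, (a : V) • b = (b : V) • a := fun a b => Subtype.ext (mul_comm _ _)
  simp only [LinearMap.smul_apply, LinearMap.id_apply, LinearMap.comp_apply, mk_apply, muMap_tmul]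
  rw [tmul_smul, smul_tmul' _ (u ⊗ₜ[V] v), smul_tmul' _ (x ⊗ₜ[V] y), smul_tmul_smul,
    smul_tmul_smul, smul_swap x, smul_swap y]

theorem muMap_isAlmostIsomorphism (hm : m * m = m) :
    IsAlmostIsomorphism (N := (m ⊗[V] m) ⊗[V] M) (M := M) m (muMap m M) := by
  constructor
  · intro a ha t ht
    suffices m * m ≤ (Submodule.span V {t}).annihilator from
      (Submodule.mem_annihilator_span_singleton t a).mp (this (hm.symm ▸ ha))
    refine Ideal.mul_le.mpr fun x hx y hy => ?_
    rw [Submodule.mem_annihilator_span_singleton,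
      mul_smul_eq_tmul_muMap ⟨x, hx⟩ ⟨y, hy⟩, LinearMap.mem_ker.mp ht, tmul_zero]
  · intro a ha s
    suffices m * m ≤ (LinearMap.range (muMap m M)).colon {s} from
      Submodule.mem_colon_singleton.mp (this (hm.symm ▸ ha))
    exact Ideal.mul_le.mpr fun x hx y hy =>
      Submodule.mem_colon_singleton.mpr ⟨(⟨x, hx⟩ ⊗ₜ ⟨y, hy⟩) ⊗ₜ s, muMap_tmul _ _ _⟩

end MuMap

section Lift

variable {I : Ideal V} {N M : Type*} [AddCommGroup N] [Module V N] [AddCommGroup M] [Module V M]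
  (φ : N →ₗ[V] M)

noncomputable def smulPreimage (hφ : ∀ a ∈ I, ∀ x ∈ LinearMap.ker φ, a • x = 0) :
    LinearMap.range φ →ₗ[V] I →ₗ[V] N :=
  (LinearMap.ker φ).liftQ ((LinearMap.lsmul V N).flip.compl₂ I.subtype)
      (fun n hn => LinearMap.mem_ker.mpr (LinearMap.ext fun a => hφ a a.2 n hn)) ∘ₗ
    φ.quotKerEquivRange.symm.toLinearMap

theorem apply_smulPreimage (hφ : ∀ a ∈ I, ∀ x ∈ LinearMap.ker φ, a • x = 0)
    (z : LinearMap.range φ) (a : I) : φ (smulPreimage φ hφ z a) = (a : V) • (z : M) := by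
  obtain ⟨_, hz⟩ := z
  obtain ⟨n, rfl⟩ := LinearMap.mem_range.mp hz
  rw [smulPreimage, LinearMap.comp_apply, LinearEquiv.coe_coe,
    LinearMap.quotKerEquivRange_symm_apply_image, Submodule.mkQ_apply, Submodule.liftQ_apply]
  simp

noncomputable def smulIntoRange (hφ : ∀ a ∈ I, ∀ y, a • y ∈ LinearMap.range φ) :
    I →ₗ[V] M →ₗ[V] LinearMap.range φ :=
  ((LinearMap.lsmul V M).comp I.subtype).codRestrict₂ (LinearMap.range φ).subtype
    (LinearMap.range φ).injective_subtype
    (fun a y => by rw [Submodule.range_subtype]; exact hφ a a.2 y)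

@[simp]
theorem coe_smulIntoRange (hφ : ∀ a ∈ I, ∀ y, a • y ∈ LinearMap.range φ) (a : I) (y : M) :
    (smulIntoRange φ hφ a y : M) = (a : V) • y :=
  LinearMap.codRestrict₂_apply ((LinearMap.lsmul V M).comp I.subtype)
    (LinearMap.range φ).subtype _ _ a y

noncomputable def muMapLift (hker : ∀ a ∈ I, ∀ x ∈ LinearMap.ker φ, a • x = 0)
    (hcoker : ∀ a ∈ I, ∀ y, a • y ∈ LinearMap.range φ) : (I ⊗[V] I) ⊗[V] M →ₗ[V] N :=
  TensorProduct.lift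
      ((smulPreimage φ hker).flip.compl₂ (TensorProduct.lift (smulIntoRange φ hcoker))) ∘ₗ
    (TensorProduct.assoc V I I M).toLinearMap

theorem comp_muMapLift (hker : ∀ a ∈ I, ∀ x ∈ LinearMap.ker φ, a • x = 0)
    (hcoker : ∀ a ∈ I, ∀ y, a • y ∈ LinearMap.range φ) :
    φ ∘ₗ muMapLift φ hker hcoker = muMap I M :=
  TensorProduct.ext_threefold fun x y s => by
    simp [muMapLift, apply_smulPreimage, mul_smul]

end Lift

end

/-- Let `V` be a commutative ring, `m` an ideal with `m·m = m`, and let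
`μ_M : m̃ ⊗_V M → M` be the map `x ⊗ y ⊗ s ↦ (xy)·s`.  Then `μ_M` is an almost
isomorphism, and for every `V`-linear almost isomorphism `φ : N → M` there is a unique
`V`-linear `ψ : m̃ ⊗_V M → N` with `φ ∘ ψ = μ_M`. -/
theorem muMap_isAlmostIsomorphism_and_lifts
    {V : Type*} [CommRing V] (m : Ideal V) (hm : m * m = m)
    (M : Type*) [AddCommGroup M] [Module V M] :
    IsAlmostIsomorphism (N := TensorProduct V (TensorProduct V m m) M) (M := M) m (muMap m M) ∧
      ∀ (N : Type*) [AddCommGroup N] [Module V N] (φ : N →ₗ[V] M),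
        IsAlmostIsomorphism m φ →
          ∃! ψ : TensorProduct V (TensorProduct V m m) M →ₗ[V] N,
            φ.comp ψ = muMap m M := by
  refine ⟨muMap_isAlmostIsomorphism hm, fun N _ _ φ ⟨hker, hcoker⟩ => ?_⟩
  have smul_top : m • (⊤ : Submodule V ((m ⊗[V] m) ⊗[V] M)) = ⊤ :=
    TensorProduct.smul_top_eq_top_of_left
      (TensorProduct.smul_top_eq_top_of_left (m.smul_top_eq_top_of_mul_self hm))
  refine ⟨muMapLift φ hker hcoker, comp_muMapLift φ hker hcoker, fun ψ hψ => ?_⟩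
  exact LinearMap.eq_of_comp_eq_of_smul_top_eq_top smul_top hker
    (hψ.trans (comp_muMapLift φ hker hcoker).symm)
end

section
/- Let V be a commutative ring, m ⊆ V an ideal satisfying m·m = m, R a commutative V-algebra, and M an almost finitely generated R-module. Consider the conditions: (i) M is almost projective; (ii) for every ε ∈ m there exist n ∈ ℕ and R-linear maps u : M → R^n and v : R^n → M with v ∘ u = ε·id_M; (iii) M is almost flat. Then (i) and (ii) are equivalent, and each implies (iii). -/
universe u v

open CategoryTheory

/-- An `R`-module `M` (for `R` a `V`-algebra) is almost projective (w.r.t. an ideal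
`m ⊆ V`) if `m·Ext^i_R(M, N) = 0` for every `R`-module `N` and every `i > 0`. -/
def IsAlmostProjective (V : Type v) [CommRing V] (m : Ideal V)
    (R : Type u) [CommRing R] [Algebra V R]
    (M : Type u) [AddCommGroup M] [Module R M] : Prop :=
  ∀ i : ℕ, 0 < i → ∀ N : ModuleCat.{u} R, ∀ a ∈ m,
    ∀ x : ((Ext R (ModuleCat.{u} R) i).obj (Opposite.op (ModuleCat.of R M))).obj N,
      algebraMap V R a • x = 0

/-- An `R`-module `M` (for `R` a `V`-algebra) is almost flat (w.r.t. an ideal `m ⊆ V`)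
if `m·Tor_1^R(M, N) = 0` for every `R`-module `N`. -/
def IsAlmostFlat (V : Type v) [CommRing V] (m : Ideal V)
    (R : Type u) [CommRing R] [Algebra V R]
    (M : Type u) [AddCommGroup M] [Module R M] : Prop :=
  ∀ N : ModuleCat.{u} R, ∀ a ∈ m,
    ∀ x : ((Tor (ModuleCat.{u} R) 1).obj (ModuleCat.of R M)).obj N,
      algebraMap V R a • x = 0

/-- An `R`-module `M` (for `R` a `V`-algebra) is almost finitely generated (w.r.t. an
ideal `m ⊆ V`) if for every `ε ∈ m` there is a finitely generated submodule `M_ε ⊆ M`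
with `ε·M ⊆ M_ε`. -/
def IsAlmostFG (V : Type v) [CommRing V] (m : Ideal V)
    (R : Type u) [CommRing R] [Algebra V R]
    (M : Type u) [AddCommGroup M] [Module R M] : Prop :=
  ∀ ε ∈ m, ∃ M₀ : Submodule R M, M₀.FG ∧ ∀ x : M, algebraMap V R ε • x ∈ M₀

/-!
If `ε • id_M` factors as `M → Rⁿ → M`, then multiplication by `ε` on `Ext^i(M, -)` and
`Tor_i(M, -)` factors through the corresponding groups of the free module `Rⁿ`, which vanish
for `i > 0`. Conversely, let `a, b ∈ m`. Almost finite generation makes `b • id_M` factor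
through a finitely generated module `Q`; pulling a surjection `Rⁿ ↠ Q` back along `M → Q`
gives an extension of `M`, and since `a` kills `Ext¹(M, -)`, `a • id_M` lifts to it, so that
`ab • id_M` factors through `Rⁿ`. The scalars admitting such a factorization form an ideal,
which therefore contains `m · m = m`.
-/

namespace Module

variable {R : Type*} [CommRing R] {M : Type*} [AddCommGroup M] [Module R M]

variable (R M) in
def factorThroughFinFreeIdeal : Ideal R where
  carrier := {r | ∃ (n : ℕ) (u : M →ₗ[R] (Fin n → R)) (v : (Fin n → R) →ₗ[R] M),
    v.comp u = r • LinearMap.id}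
  zero_mem' := ⟨0, 0, 0, by simp⟩
  add_mem' := by
    rintro r s ⟨n₁, u₁, v₁, h₁⟩ ⟨n₂, u₂, v₂, h₂⟩
    let e : ((Fin n₁ → R) × (Fin n₂ → R)) ≃ₗ[R] (Fin (n₁ + n₂) → R) :=
      (LinearEquiv.sumArrowLequivProdArrow _ _ R R).symm ≪≫ₗ
        LinearEquiv.funCongrLeft R R finSumFinEquiv.symm
    refine ⟨n₁ + n₂, e.toLinearMap ∘ₗ u₁.prod u₂, v₁.coprod v₂ ∘ₗ e.symm.toLinearMap, ?_⟩
    have hcancel : (v₁.coprod v₂ ∘ₗ e.symm.toLinearMap) ∘ₗ e.toLinearMap ∘ₗ u₁.prod u₂ =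
        v₁.coprod v₂ ∘ₗ u₁.prod u₂ := by
      ext; simp
    rw [hcancel, LinearMap.coprod_comp_prod, h₁, h₂, add_smul]
  smul_mem' := by
    rintro c r ⟨n, u, v, h⟩
    exact ⟨n, c • u, v, by rw [LinearMap.comp_smul, h, smul_smul, smul_eq_mul]⟩

end Module

open Limits

theorem HomologicalComplex.forall_smul_eq_zero_iff_of_iso_homology {R : Type u} [CommRing R]
    {ι : Type*} {c : ComplexShape ι} (K : HomologicalComplex (ModuleCat.{u} R) c) {i j k : ι}
    (hi : c.prev j = i) (hk : c.next j = k) {T : ModuleCat.{u} R} (e : T ≅ K.homology j)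
    (r : R) :
    (∀ x : T, r • x = 0) ↔
      ∀ z : K.X j, K.d j k z = 0 → ∃ y : K.X i, K.d i j y = r • z := by
  set S := K.sc' i j k
  let e' : T ≃ₗ[R] LinearMap.ker S.g.hom ⧸ LinearMap.range S.moduleCatToCycles :=
    (e ≪≫ K.homologyIsoSc' i j k hi hk ≪≫ S.moduleCatHomologyIso).toLinearEquiv
  have hmk (z : LinearMap.ker S.g.hom) :
      r • (Submodule.Quotient.mk z : _ ⧸ LinearMap.range S.moduleCatToCycles) = 0 ↔
      ∃ y : K.X i, K.d i j y = r • z.1 := by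
    rw [← Submodule.Quotient.mk_smul, Submodule.Quotient.mk_eq_zero]
    exact ⟨fun ⟨y, hy⟩ => ⟨y, congrArg Subtype.val hy⟩, fun ⟨y, hy⟩ => ⟨y, Subtype.ext hy⟩⟩
  constructor
  · intro h z hz
    refine (hmk ⟨z, hz⟩).1 ?_
    simpa using congrArg e' (h (e'.symm (Submodule.Quotient.mk ⟨z, hz⟩)))
  · intro h x
    obtain ⟨z, hz⟩ := Submodule.Quotient.mk_surjective _ (e' x)
    apply e'.injective
    rw [map_smul, map_zero, ← hz]
    exact (hmk z).2 (h z.1 z.2)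

theorem smul_Ext_succ_eq_zero_of_comp_eq_smul_id {R : Type u} [CommRing R]
    {X F : ModuleCat.{u} R} [Projective F] (U : X ⟶ F) (V : F ⟶ X) {r : R}
    (hUV : U ≫ V = r • 𝟙 X) (k : ℕ) (N : ModuleCat.{u} R)
    (x : ((Ext R (ModuleCat.{u} R) (k + 1)).obj (Opposite.op X)).obj N) : r • x = 0 := by
  let P : ProjectiveResolution X := (HasProjectiveResolution.out).some
  let Q := ProjectiveResolution.self F
  -- `r • 𝟙` on `P` is homotopic to a chain map factoring through `Q`, which vanishes in
  -- positive degrees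
  let G : P.complex ⟶ P.complex := P.lift U Q ≫ Q.lift V P
  have hG : G.f (k + 1) = 0 := by
    have hU : (P.lift U Q).f (k + 1) = 0 :=
      (HomologicalComplex.isZero_single_obj_X _ 0 F (k + 1) (by simp)).eq_of_tgt _ _
    simp only [G, HomologicalComplex.comp_f, hU, zero_comp]
  let H : Homotopy (r • 𝟙 P.complex) G := ProjectiveResolution.liftHomotopy (r • 𝟙 X) _ _
    (HomologicalComplex.to_single_hom_ext (by simp; rfl)) (by simp [G, ← Functor.map_comp, hUV])
  have hcomm := H.comm (k + 1)
  rw [dNext_eq H.hom (show (ComplexShape.down ℕ).Rel (k + 1) k by simp),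
    prevD_eq H.hom (show (ComplexShape.down ℕ).Rel (k + 2) (k + 1) by simp), hG, add_zero] at hcomm
  refine ((HomologicalComplex.forall_smul_eq_zero_iff_of_iso_homology _
    (i := k) (k := k + 2) (ComplexShape.prev_eq' _ (by simp)) (ComplexShape.next_eq' _ (by simp))
    (P.isoExt (k + 1) N) r).2 ?_) x
  intro (z : P.complex.X (k + 1) ⟶ N) (hz : P.complex.d (k + 2) (k + 1) ≫ z = 0)
  refine ⟨H.hom k (k + 1) ≫ z, ?_⟩
  change P.complex.d (k + 1) k ≫ H.hom k (k + 1) ≫ z = r • z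
  have := congrArg (· ≫ z) hcomm
  simp only [HomologicalComplex.smul_f_apply, HomologicalComplex.id_f, Linear.smul_comp,
    Category.id_comp, Preadditive.add_comp, Category.assoc, hz, comp_zero, add_zero] at this
  exact this.symm

open MonoidalCategory in
theorem smul_Tor_succ_eq_zero_of_comp_eq_smul_id {R : Type u} [CommRing R]
    {X F : ModuleCat.{u} R} [Module.Flat R F] (U : X ⟶ F) (V : F ⟶ X) {r : R}
    (hUV : U ≫ V = r • 𝟙 X) (k : ℕ) (N : ModuleCat.{u} R)
    (x : ((Tor (ModuleCat.{u} R) (k + 1)).obj X).obj N) : r • x = 0 := by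
  let Q : ProjectiveResolution N := (HasProjectiveResolution.out).some
  let d₁ := Q.complex.d (k + 1) k
  let d₂ := Q.complex.d (k + 2) (k + 1)
  refine ((HomologicalComplex.forall_smul_eq_zero_iff_of_iso_homology _
    (i := k + 2) (k := k) (ComplexShape.prev_eq' _ (by simp)) (ComplexShape.next_eq' _ (by simp))
    (Q.isoLeftDerivedObj ((tensoringLeft _).obj X) (k + 1)) r).2 ?_) x
  intro (z : (X ⊗ Q.complex.X (k + 1) : ModuleCat.{u} R)) (hz : (X ◁ d₁) z = 0)
  have hUz : (F ◁ d₁) ((U ▷ _) z) = 0 :=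
    calc _ = (U ▷ _) ((X ◁ d₁) z) := (ConcreteCategory.congr_hom (whisker_exchange U d₁) z).symm
      _ = 0 := by rw [hz, map_zero]
  -- `F ⊗ Q` is still exact, `F` being flat
  obtain ⟨(y : (F ⊗ Q.complex.X (k + 2) : ModuleCat.{u} R)), hy⟩ :=
    (ShortComplex.moduleCat_exact_iff _).1
      (Module.Flat.lTensor_shortComplex_exact F _ (Q.exact_succ k)) _ hUz
  refine ⟨(V ▷ _) y, ?_⟩
  change (F ◁ d₂) y = (U ▷ _) z at hy
  calc (X ◁ d₂) ((V ▷ _) y) = (V ▷ _) ((F ◁ d₂) y) :=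
        (ConcreteCategory.congr_hom (whisker_exchange V d₂) y).symm
    _ = (V ▷ _) ((U ▷ _) z) := by rw [hy]
    _ = ((U ≫ V) ▷ _) z := (ConcreteCategory.congr_hom (comp_whiskerRight U V _) z).symm
    _ = r • z := by
        rw [hUV, MonoidalLinear.smul_whiskerRight, id_whiskerRight]
        rfl

theorem exists_comp_eq_smul_id_of_smul_Ext_one_eq_zero {R : Type u} [CommRing R]
    {X E : ModuleCat.{u} R} (p : E ⟶ X) [Epi p] {r : R}
    (hr : ∀ x : ((Ext R (ModuleCat.{u} R) 1).obj (Opposite.op X)).obj (kernel p), r • x = 0) :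
    ∃ s : X ⟶ E, s ≫ p = r • 𝟙 X := by
  let P : ProjectiveResolution X := (HasProjectiveResolution.out).some
  let d := P.complex.d 1 0
  let π₀ : P.complex.X 0 ⟶ X := P.π.f 0
  let g : P.complex.X 0 ⟶ E := Projective.factorThru π₀ p
  -- the extension class of `p`, pulled back along `P`, as a cocycle `P₁ ⟶ ker p`
  let z : P.complex.X 1 ⟶ kernel p := kernel.lift p (d ≫ g)
    (by rw [Category.assoc, Projective.factorThru_comp]; exact P.complex_d_comp_π_f_zero)
  have hz : P.complex.d 2 1 ≫ z = 0 := by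
    rw [← cancel_mono (kernel.ι p)]
    simp [z, d]
  obtain ⟨y, hy⟩ := (HomologicalComplex.forall_smul_eq_zero_iff_of_iso_homology _
    (i := 0) (k := 2) (ComplexShape.prev_eq' _ (by simp)) (ComplexShape.next_eq' _ (by simp))
    (P.isoExt 1 (kernel p)) r).1 hr z hz
  change P.complex.X 0 ⟶ kernel p at y
  change d ≫ y = r • z at hy
  let w : P.complex.X 0 ⟶ E := r • g - y ≫ kernel.ι p
  have hw : d ≫ w = 0 := by
    simp only [w, Preadditive.comp_sub, Linear.comp_smul, ← Category.assoc, hy, Linear.smul_comp,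
      z, kernel.lift_ι, sub_self]
  let s : X ⟶ E := P.exact₀.desc w hw
  have hs : π₀ ≫ s = w := P.exact₀.g_desc w hw
  refine ⟨s, ?_⟩
  have : Epi π₀ := inferInstanceAs (Epi (P.π.f 0))
  rw [← cancel_epi π₀, ← Category.assoc, hs]
  simp [w, g]

theorem mul_mem_factorThroughFinFreeIdeal_of_smul_Ext_one_eq_zero {R : Type u} [CommRing R]
    {M : Type u} [AddCommGroup M] [Module R M] {Q : Type*} [AddCommGroup Q] [Module R Q]
    [Module.Finite R Q] (β : M →ₗ[R] Q) (ι : Q →ₗ[R] M) {b : R} (hb : ι ∘ₗ β = b • LinearMap.id)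
    {r : R} (hr : ∀ N : ModuleCat.{u} R,
      ∀ x : ((Ext R (ModuleCat.{u} R) 1).obj (Opposite.op (ModuleCat.of R M))).obj N, r • x = 0) :
    r * b ∈ Module.factorThroughFinFreeIdeal R M := by
  obtain ⟨n, f, hf⟩ := Module.Finite.exists_fin' R Q
  -- the pullback of `f` along `β`
  let E := LinearMap.ker (β ∘ₗ LinearMap.fst R M (Fin n → R) - f ∘ₗ LinearMap.snd R M _)
  let p : E →ₗ[R] M := LinearMap.fst R M _ ∘ₗ E.subtype
  have hp : Function.Surjective p := fun x => by
    obtain ⟨y, hy⟩ := hf (β x)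
    exact ⟨⟨(x, y), by simp [E, hy]⟩, rfl⟩
  have : Epi (ModuleCat.ofHom p) := (ModuleCat.epi_iff_surjective _).2 hp
  obtain ⟨s, hs⟩ := exists_comp_eq_smul_id_of_smul_Ext_one_eq_zero (ModuleCat.ofHom p) (hr _)
  refine ⟨n, LinearMap.snd R M _ ∘ₗ E.subtype ∘ₗ s.hom, ι ∘ₗ f, LinearMap.ext fun x => ?_⟩
  have hsx : β (s x).1.1 = f (s x).1.2 := sub_eq_zero.1 (s x).2
  have hpx : (s x).1.1 = r • x := LinearMap.congr_fun (congrArg ModuleCat.Hom.hom hs) x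
  calc ι (f (s x).1.2) = ι (β (r • x)) := by rw [← hsx, hpx]
    _ = (r * b) • x := by rw [← LinearMap.comp_apply, hb, LinearMap.smul_apply,
        LinearMap.id_apply, smul_smul, mul_comm]

section Almost

variable {V : Type v} [CommRing V] {m : Ideal V} {R : Type u} [CommRing R] [Algebra V R]
  {M : Type u} [AddCommGroup M] [Module R M]

theorem IsAlmostProjective.le_comap_factorThroughFinFreeIdeal (hm : m * m = m)
    (hfg : IsAlmostFG V m R M) (hM : IsAlmostProjective V m R M) :
    m ≤ (Module.factorThroughFinFreeIdeal R M).comap (algebraMap V R) := by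
  rw [← hm, Ideal.mul_le]
  intro a ha b hb
  obtain ⟨M₀, hM₀, hbM⟩ := hfg b hb
  have : Module.Finite R M₀ := Module.Finite.iff_fg.2 hM₀
  rw [Ideal.mem_comap, map_mul]
  exact mul_mem_factorThroughFinFreeIdeal_of_smul_Ext_one_eq_zero
    ((algebraMap V R b • LinearMap.id).codRestrict M₀ hbM) M₀.subtype rfl
    (fun N => hM 1 one_pos N a ha)

theorem isAlmostProjective_of_le_comap_factorThroughFinFreeIdeal
    (h : m ≤ (Module.factorThroughFinFreeIdeal R M).comap (algebraMap V R)) :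
    IsAlmostProjective V m R M := by
  rintro i hi N a ha x
  obtain ⟨k, rfl⟩ := Nat.exists_eq_add_of_lt hi
  obtain ⟨n, u, v, huv⟩ := h ha
  exact smul_Ext_succ_eq_zero_of_comp_eq_smul_id (F := ModuleCat.of R (Fin n → R))
    (ModuleCat.ofHom u) (ModuleCat.ofHom v) (ModuleCat.hom_ext huv) _ N x

theorem isAlmostFlat_of_le_comap_factorThroughFinFreeIdeal
    (h : m ≤ (Module.factorThroughFinFreeIdeal R M).comap (algebraMap V R)) :
    IsAlmostFlat V m R M := by
  intro N a ha x
  obtain ⟨n, u, v, huv⟩ := h ha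
  exact smul_Tor_succ_eq_zero_of_comp_eq_smul_id (F := ModuleCat.of R (Fin n → R))
    (ModuleCat.ofHom u) (ModuleCat.ofHom v) (ModuleCat.hom_ext huv) 0 N x

end Almost

/-- Let `M` be an almost finitely generated `R`-module.  Consider:
(i) `M` is almost projective;
(ii) for every `ε ∈ m` there are `n ∈ ℕ` and maps `u : M → R^n`, `v : R^n → M` with
`v ∘ u = ε·id_M`;
(iii) `M` is almost flat.
Then (i) ⇔ (ii), and each implies (iii). -/
theorem isAlmostProjective_iff_split_and_implies_flat
    (V : Type v) [CommRing V] (m : Ideal V) (hm : m * m = m)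
    (R : Type u) [CommRing R] [Algebra V R]
    (M : Type u) [AddCommGroup M] [Module R M]
    (hfg : IsAlmostFG V m R M) :
    (IsAlmostProjective V m R M ↔
      ∀ ε ∈ m, ∃ (n : ℕ) (u : M →ₗ[R] (Fin n → R)) (v : (Fin n → R) →ₗ[R] M),
        v.comp u = algebraMap V R ε • (LinearMap.id : M →ₗ[R] M)) ∧
    (IsAlmostProjective V m R M → IsAlmostFlat V m R M) ∧
    ((∀ ε ∈ m, ∃ (n : ℕ) (u : M →ₗ[R] (Fin n → R)) (v : (Fin n → R) →ₗ[R] M),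
        v.comp u = algebraMap V R ε • (LinearMap.id : M →ₗ[R] M)) →
      IsAlmostFlat V m R M) := by
  have hsplit : IsAlmostProjective V m R M ↔
      m ≤ (Module.factorThroughFinFreeIdeal R M).comap (algebraMap V R) :=
    ⟨IsAlmostProjective.le_comap_factorThroughFinFreeIdeal hm hfg,
      isAlmostProjective_of_le_comap_factorThroughFinFreeIdeal⟩
  exact ⟨hsplit, fun h => isAlmostFlat_of_le_comap_factorThroughFinFreeIdeal (hsplit.1 h),
    isAlmostFlat_of_le_comap_factorThroughFinFreeIdeal⟩
end

section
/- Let A be a commutative ring and let p₁, …, p_k ∈ A[X] be finitely many monic polynomials. Then there exists a commutative A-algebra C which is finitely generated and faithfully flat as an A-module, such that for each i the image of p_i in C[X] factors as a product of monic linear polynomials (X − α₁)⋯(X − α_{deg p_i}) with α₁, …, α_{deg p_i} ∈ C. -/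
universe u

open Polynomial

private theorem split_single : ∀ (n : ℕ) (A : Type u) [CommRing A] (q : Polynomial A),
    q.Monic → q.natDegree = n →
    ∃ (C : Type u) (_ : CommRing C) (_ : Algebra A C),
      Module.Finite A C ∧ Module.FaithfullyFlat A C ∧
        ∃ α : Fin n → C, q.map (algebraMap A C) = ∏ j, (X - Polynomial.C (α j)) := by
  intro n
  induction n with
  | zero =>
    intro A _ q hq hdeg
    refine ⟨A, inferInstance, inferInstance, inferInstance, inferInstance, ⟨Fin.elim0, ?_⟩⟩
    rw [hq.natDegree_eq_zero.mp hdeg]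
    simp
  | succ n ih =>
    intro A _ q hq hdeg
    -- adjoin one root
    set B := AdjoinRoot q with hB
    let pb := AdjoinRoot.powerBasis' hq
    haveI : Module.Free A B := Module.Free.of_basis pb.basis
    haveI : Module.Finite A B := Module.Finite.of_basis pb.basis
    haveI hBflat : Module.FaithfullyFlat A B := by
      rcases subsingleton_or_nontrivial A with hA | hA
      · haveI : Subsingleton B := Module.subsingleton A B
        exact Module.FaithfullyFlat.of_linearEquiv A A
          { toFun := fun _ => 0, invFun := fun _ => 0,
            map_add' := fun _ _ => Subsingleton.elim _ _,
            map_smul' := fun _ _ => Subsingleton.elim _ _,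
            left_inv := fun _ => Subsingleton.elim _ _,
            right_inv := fun _ => Subsingleton.elim _ _ }
      · haveI : Nonempty (Fin pb.dim) := by
          have : pb.dim = q.natDegree := rfl
          rw [this, hdeg]; exact ⟨0⟩
        haveI : Nontrivial B := pb.basis.repr.toEquiv.nontrivial
        infer_instance
    rcases subsingleton_or_nontrivial B with hBs | hBn
    · -- everything over a trivial ring holds trivially
      refine ⟨B, inferInstance, inferInstance, inferInstance, inferInstance,
        fun _ => 0, Subsingleton.elim _ _⟩
    -- factor out the root
    set r : B := AdjoinRoot.root q with hr
    have hroot : (q.map (algebraMap A B)).IsRoot r := by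
      rw [IsRoot, eval_map, AdjoinRoot.algebraMap_eq]
      exact AdjoinRoot.eval₂_root q
    set q' : Polynomial B := (q.map (algebraMap A B)) /ₘ (X - Polynomial.C r) with hq'
    have hfac : (X - Polynomial.C r) * q' = q.map (algebraMap A B) :=
      mul_divByMonic_eq_iff_isRoot.mpr hroot
    have hmapmonic : (q.map (algebraMap A B)).Monic := hq.map _
    have hq'monic : q'.Monic :=
      (monic_X_sub_C r).of_mul_monic_left (by rwa [hfac])
    have hq'deg : q'.natDegree = n := by
      rw [hq', natDegree_divByMonic _ (monic_X_sub_C r), hq.natDegree_map, hdeg,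
        natDegree_X_sub_C]
      omega
    obtain ⟨C, _, _, hfin, hff, α, hα⟩ := ih B q' hq'monic hq'deg
    letI : Algebra A C := ((algebraMap B C).comp (algebraMap A B)).toAlgebra
    haveI : IsScalarTower A B C := IsScalarTower.of_algebraMap_eq fun _ => rfl
    haveI : Module.Finite A C := Module.Finite.trans B C
    haveI : Module.FaithfullyFlat A C := Module.FaithfullyFlat.trans A B C
    refine ⟨C, inferInstance, inferInstance, inferInstance, inferInstance,
      Fin.cons (algebraMap B C r) (fun j => α j), ?_⟩
    have : q.map (algebraMap A C) = (q.map (algebraMap A B)).map (algebraMap B C) := by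
      rw [Polynomial.map_map, ← IsScalarTower.algebraMap_eq]
    rw [this, ← hfac, Polynomial.map_mul, hα, Fin.prod_univ_succ]
    simp

/-- Let `A` be a commutative ring and `p₁, …, p_k` finitely many monic
polynomials over `A`.  Then there is a commutative `A`-algebra `C`, finitely generated
and faithfully flat as an `A`-module, over which each `p_i` splits into monic linear
factors. -/
theorem exists_finite_faithfullyFlat_splitting
    (A : Type u) [CommRing A] (k : ℕ) (p : Fin k → Polynomial A)
    (hmonic : ∀ i, (p i).Monic) :
    ∃ (C : Type u) (_ : CommRing C) (_ : Algebra A C),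
      Module.Finite A C ∧ Module.FaithfullyFlat A C ∧
        ∀ i, ∃ α : Fin (p i).natDegree → C,
          (p i).map (algebraMap A C) = ∏ j, (X - Polynomial.C (α j)) := by
  induction k with
  | zero =>
    exact ⟨A, inferInstance, inferInstance, inferInstance, inferInstance,
      fun i => i.elim0⟩
  | succ k ih =>
    obtain ⟨B, _, _, hfinB, hffB, hsplit⟩ :=
      ih (fun i => p i.succ) (fun i => hmonic i.succ)
    rcases subsingleton_or_nontrivial B with hBs | hBn
    · refine ⟨B, inferInstance, inferInstance, inferInstance, inferInstance,
        fun i => ⟨fun _ => 0, Subsingleton.elim _ _⟩⟩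
    -- split the image of `p 0` over `B`
    obtain ⟨C, _, _, hfinC, hffC, α₀, hα₀⟩ :=
      split_single ((p 0).natDegree) B ((p 0).map (algebraMap A B))
        ((hmonic 0).map _) ((hmonic 0).natDegree_map _)
    letI : Algebra A C := ((algebraMap B C).comp (algebraMap A B)).toAlgebra
    haveI : IsScalarTower A B C := IsScalarTower.of_algebraMap_eq fun _ => rfl
    haveI : Module.Finite A C := Module.Finite.trans B C
    haveI : Module.FaithfullyFlat A C := Module.FaithfullyFlat.trans A B C
    refine ⟨C, inferInstance, inferInstance, inferInstance, inferInstance, ?_⟩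
    intro i
    have hmap : ∀ f : Polynomial A, f.map (algebraMap A C)
        = (f.map (algebraMap A B)).map (algebraMap B C) := fun f => by
      rw [Polynomial.map_map, ← IsScalarTower.algebraMap_eq]
    refine Fin.cases ?_ ?_ i
    · exact ⟨α₀, by rw [hmap]; exact hα₀⟩
    · intro j
      obtain ⟨β, hβ⟩ := hsplit j
      refine ⟨fun m => algebraMap B C (β m), ?_⟩
      rw [hmap, hβ, Polynomial.map_prod]
      simp
end
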